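/- (Scalar comparison for integro-differential systems) Suppose a(t) ≤ −γ for all t ≥ 0 with γ > 0, b : [0,∞) → [0,∞) is integrable, and −γ + ∫₀^∞ b(t)dt < 0. Then every solution of the scalar equation ẋ(t) = a(t)x(t) + ∫₀^t b(t−s)x(s)ds with x(0) > 0 satisfies x(t) → 0 as t → ∞. -/

import Mathlib

open Filter MeasureTheory

open Topology Set

/-!
Write `β = ∫ b < γ`. At the first time `|x|` reaches a level `c > |x 0|`, the memory term is at
most `β c` while `a x` pulls back with strength at least `γ c`, so `|x| ≤ |x 0|` for all time.
If `|x| ≤ m` eventually, the memory term is eventually at most `β m` plus a small error, because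
the remote past only enters through `|x 0|` times a tail of `∫ b`. A scalar equation
`ẋ = a x + g` with `a ≤ -γ` and `|g| ≤ K` drives `|x|` eventually below any `L > K / γ`.
Hence eventual bounds contract by the factor `β / γ < 1`, and `x → 0`.
-/

lemma mul_nonneg_of_hasDerivAt_of_abs_le_left {f : ℝ → ℝ} {d T t : ℝ}
    (hf : HasDerivAt f d t) (hTt : T < t) (hmax : ∀ s ∈ Icc T t, |f s| ≤ |f t|) :
    0 ≤ f t * d := by
  have hmax_sq : IsMaxOn (fun s => f s * f s) (Icc T t) t := fun s hs =>
    show f s * f s ≤ f t * f t by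
      simpa only [abs_mul_abs_self] using mul_self_le_mul_self (abs_nonneg _) (hmax s hs)
  -- one-sided Fermat rule for `f * f`, which is maximal on `[T, t]` at the right endpoint
  have hcone : T - t ∈ posTangentConeAt (Icc T t) t :=
    sub_mem_posTangentConeAt_of_segment_subset (by rw [segment_symm, segment_eq_Icc hTt.le])
  have := hmax_sq.localize.hasFDerivWithinAt_nonpos (hf.mul hf).hasDerivWithinAt hcone
  rw [ContinuousLinearMap.toSpanSingleton_apply, smul_eq_mul] at this
  nlinarith

lemma abs_lt_of_hasDerivAt_of_mul_neg {f f' : ℝ → ℝ} {T c : ℝ}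
    (hf : ∀ t ≥ T, HasDerivAt f (f' t) t) (hT : |f T| < c)
    (hexit : ∀ t > T, (∀ s ∈ Icc T t, |f s| ≤ c) → |f t| = c → f t * f' t < 0) :
    ∀ t ≥ T, |f t| < c := by
  by_contra! ⟨t₁, ht₁, hct₁⟩
  have hcont : ContinuousOn (fun s => |f s|) (Icc T t₁) := fun s hs =>
    (hf s hs.1).continuousAt.abs.continuousWithinAt
  have hcompact : IsCompact (Icc T t₁ ∩ {s | c ≤ |f s|}) :=
    isCompact_Icc.of_isClosed_subset
      (hcont.preimage_isClosed_of_isClosed isClosed_Icc isClosed_Ici) inter_subset_left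
  -- `t₀` is the first time at which `|f|` reaches `c`
  obtain ⟨t₀, ⟨⟨hTt₀, ht₀t₁⟩, hct₀⟩, hleast⟩ :=
    hcompact.exists_isLeast ⟨t₁, ⟨ht₁, le_rfl⟩, hct₁⟩
  have hTt₀ : T < t₀ := hTt₀.lt_of_ne (by rintro rfl; exact hct₀.not_gt hT)
  have hbelow : ∀ s ∈ Ico T t₀, |f s| < c := fun s hs =>
    not_le.1 fun hcs => hs.2.not_ge (hleast ⟨⟨hs.1, hs.2.le.trans ht₀t₁⟩, hcs⟩)
  have heq : |f t₀| = c := le_antisymm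
    (ContinuousWithinAt.closure_le (s := Ico T t₀)
      (by rw [closure_Ico hTt₀.ne]; exact ⟨hTt₀.le, le_rfl⟩)
      (hf t₀ hTt₀.le).continuousAt.abs.continuousWithinAt continuousWithinAt_const
      fun s hs => (hbelow s hs).le) hct₀
  have hle : ∀ s ∈ Icc T t₀, |f s| ≤ c := fun s hs =>
    hs.2.eq_or_lt.elim (fun h => h ▸ heq.le) fun h => (hbelow s ⟨hs.1, h⟩).le
  exact (hexit t₀ hTt₀ hle heq).not_ge <|
    mul_nonneg_of_hasDerivAt_of_abs_le_left (hf t₀ hTt₀.le) hTt₀ fun s hs => heq ▸ hle s hs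

lemma exists_lt_of_hasDerivAt_le_neg {y y' : ℝ → ℝ} {T L c : ℝ} (hc : 0 < c)
    (hy : ∀ t ≥ T, HasDerivAt y (y' t) t) (hy' : ∀ t ≥ T, L ≤ y t → y' t ≤ -c) :
    ∃ t ≥ T, y t < L := by
  by_contra! hL
  set t := T + (y T - L) / c + 1
  have hTt : T ≤ t := by
    have := div_nonneg (sub_nonneg.2 (hL T le_rfl)) hc.le
    linarith
  have hdecay : y t - y T ≤ -c * (t - T) := by
    refine (convex_Ici T).image_sub_le_mul_sub_of_deriv_le
      (fun s hs => (hy s hs).continuousAt.continuousWithinAt)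
      (fun s hs => (hy s (interior_subset hs)).differentiableAt.differentiableWithinAt)
      (fun s hs => ?_) T self_mem_Ici t hTt hTt
    have hs : T ≤ s := interior_subset hs
    exact (hy s hs).deriv ▸ hy' s hs (hL s hs)
  have : c * (t - T) = y T - L + c := by simp only [t]; field_simp; ring
  linarith [hL t hTt]

lemma eventually_abs_lt_of_hasDerivAt_mul_add {a g x : ℝ → ℝ} {γ K L T : ℝ} (hγ : 0 < γ)
    (ha : ∀ t ≥ T, a t ≤ -γ) (hg : ∀ t ≥ T, |g t| ≤ K) (hKL : K < γ * L)
    (hx : ∀ t ≥ T, HasDerivAt x (a t * x t + g t) t) : ∀ᶠ t in atTop, |x t| < L := by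
  have hL : 0 < L := by nlinarith [(abs_nonneg (g T)).trans (hg T le_rfl)]
  have hdissip : ∀ t ≥ T, L ≤ |x t| → x t * (a t * x t + g t) ≤ -(L * (γ * L - K)) := by
    intro t ht hLx
    have h1 : a t * (x t * x t) ≤ -γ * (|x t| * |x t|) := by
      rw [abs_mul_abs_self]; exact mul_le_mul_of_nonneg_right (ha t ht) (mul_self_nonneg _)
    have h2 : x t * g t ≤ |x t| * K := (le_abs_self _).trans
      (abs_mul (x t) (g t) ▸ mul_le_mul_of_nonneg_left (hg t ht) (abs_nonneg _))
    have h3 : L * (γ * L - K) ≤ |x t| * (γ * |x t| - K) :=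
      mul_le_mul hLx (by nlinarith) (by linarith) (abs_nonneg _)
    nlinarith
  -- `x * x` decreases at a uniform rate while `|x| ≥ L`, so `|x|` drops below `L`, and
  -- the same estimate forbids it to climb back
  have habs_sq : ∀ t, |x t| * |x t| = x t * x t := fun t => abs_mul_abs_self _
  obtain ⟨s, hsT, hs⟩ : ∃ s ≥ T, x s * x s < L * L := by
    refine exists_lt_of_hasDerivAt_le_neg (c := 2 * (L * (γ * L - K))) (by nlinarith)
      (fun t ht => (hx t ht).mul (hx t ht)) fun t ht hLx => ?_
    have := hdissip t ht ((mul_self_le_mul_self_iff hL.le (abs_nonneg _)).2 (habs_sq t ▸ hLx))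
    linarith
  refine eventually_atTop.2 ⟨s, abs_lt_of_hasDerivAt_of_mul_neg (fun t ht => hx t (hsT.trans ht))
    ((mul_self_lt_mul_self_iff (abs_nonneg _) hL.le).2 (habs_sq s ▸ hs)) fun t ht _ hLx => ?_⟩
  exact (hdissip t (hsT.trans ht.le) hLx.ge).trans_lt
    (neg_neg_of_pos (mul_pos hL (by linarith)))

lemma tendsto_zero_of_eventually_abs_le_mul_add {α : Type*} {l : Filter α} {f : α → ℝ}
    {q M : ℝ} (hq0 : 0 ≤ q) (hq1 : q < 1) (hM : ∀ᶠ t in l, |f t| ≤ M)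
    (hstep : ∀ m ε, 0 < ε → (∀ᶠ t in l, |f t| ≤ m) →
      ∀ᶠ t in l, |f t| ≤ q * m + ε) :
    Tendsto f l (𝓝 0) := by
  have hiter : ∀ n : ℕ, ∀ ε > 0, ∀ᶠ t in l, |f t| ≤ q ^ n * M + ε := by
    intro n
    induction n with
    | zero => exact fun ε hε => hM.mono fun t ht => by linarith
    | succ n ih =>
      intro ε hε
      filter_upwards [hstep _ (ε / 2) (by positivity) (ih (ε / 2) (by positivity))] with t ht
      calc |f t| ≤ q * (q ^ n * M + ε / 2) + ε / 2 := ht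
        _ ≤ q ^ (n + 1) * M + ε := by rw [pow_succ]; nlinarith
  rw [Metric.tendsto_nhds]
  intro ε hε
  have hpow : Tendsto (fun n : ℕ => q ^ n * M) atTop (𝓝 0) := by
    simpa using (tendsto_pow_atTop_nhds_zero_of_lt_one hq0 hq1).mul_const M
  obtain ⟨n, hn⟩ := (hpow.eventually_lt_const (half_pos hε)).exists
  filter_upwards [hiter n (ε / 2) (half_pos hε)] with t ht
  rw [Real.dist_0_eq_abs]
  linarith

lemma tendsto_setIntegral_Ici_atTop {E : Type*} [NormedAddCommGroup E] [NormedSpace ℝ E]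
    {f : ℝ → E} {a : ℝ} (hf : IntegrableOn f (Ici a)) :
    Tendsto (fun r => ∫ t in Ici r, f t) atTop (𝓝 0) := by
  have := tendsto_setIntegral_of_antitone (fun r => measurableSet_Ici)
    (fun _ _ h => Ici_subset_Ici.2 h) ⟨a, hf⟩
  rwa [iInter_eq_empty_iff.2 fun t => ⟨t + 1, by simp⟩, Measure.restrict_empty,
    integral_zero_measure] at this

section Convolution

variable {b x : ℝ → ℝ} {t u v : ℝ}

lemma intervalIntegrable_comp_sub_left_of_integrableOn_Ici (hb : IntegrableOn b (Ici 0))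
    (huv : u ≤ v) (hvt : v ≤ t) : IntervalIntegrable (fun s => b (t - s)) volume u v := by
  have hb' : IntervalIntegrable b volume (t - u) (t - v) := by
    refine (hb.mono_set ?_).intervalIntegrable
    rw [uIcc_of_ge (by linarith)]
    exact Icc_subset_Ici_self.trans (Ici_subset_Ici.2 (by linarith))
  simpa using hb'.comp_sub_left t

lemma intervalIntegrable_comp_sub_mul (hb : IntegrableOn b (Ici 0)) (huv : u ≤ v)
    (hvt : v ≤ t) (hx : ContinuousOn x (Icc u v)) :
    IntervalIntegrable (fun s => b (t - s) * x s) volume u v :=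
  (intervalIntegrable_comp_sub_left_of_integrableOn_Ici hb huv hvt).mul_continuousOn
    (by rwa [uIcc_of_le huv])

lemma abs_integral_comp_sub_mul_le (hb_nonneg : ∀ s, 0 ≤ b s) (hb : IntegrableOn b (Ici 0))
    {c : ℝ} (hc : 0 ≤ c) (huv : u ≤ v) (hvt : v ≤ t) (hx : ∀ s ∈ Ioc u v, |x s| ≤ c) :
    |∫ s in u..v, b (t - s) * x s| ≤ c * ∫ w in Ici (t - v), b w := by
  calc |∫ s in u..v, b (t - s) * x s|
      ≤ ∫ s in u..v, c * b (t - s) := by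
        rw [← Real.norm_eq_abs]
        refine intervalIntegral.norm_integral_le_of_norm_le huv (ae_of_all _ fun s hs => ?_)
          ((intervalIntegrable_comp_sub_left_of_integrableOn_Ici hb huv hvt).const_mul c)
        rw [Real.norm_eq_abs, abs_mul, abs_of_nonneg (hb_nonneg _), mul_comm]
        exact mul_le_mul_of_nonneg_right (hx s hs) (hb_nonneg _)
    _ = c * ∫ w in (t - v)..(t - u), b w := by
        rw [intervalIntegral.integral_const_mul, intervalIntegral.integral_comp_sub_left]
    _ ≤ c * ∫ w in Ici (t - v), b w := by
        gcongr
        rw [intervalIntegral.integral_of_le (by linarith)]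
        exact setIntegral_mono_set (hb.mono_set (Ici_subset_Ici.2 (by linarith)))
          (ae_of_all _ fun w => hb_nonneg w)
          (Ioc_subset_Icc_self.trans Icc_subset_Ici_self).eventuallyLE

lemma eventually_abs_integral_comp_sub_mul_le (hb_nonneg : ∀ s, 0 ≤ b s)
    (hb : IntegrableOn b (Ici 0)) (hx : ContinuousOn x (Ici 0)) {M m δ : ℝ}
    (hM : ∀ t ≥ 0, |x t| ≤ M) (hm : ∀ᶠ t in atTop, |x t| ≤ m) (hδ : 0 < δ) :
    ∀ᶠ t in atTop,
      |∫ s in (0:ℝ)..t, b (t - s) * x s| ≤ m * (∫ w in Ici 0, b w) + δ := by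
  obtain ⟨T, hT0, hTm⟩ : ∃ T ≥ 0, ∀ t ≥ T, |x t| ≤ m := by
    obtain ⟨T, hT⟩ := eventually_atTop.1 hm
    exact ⟨max T 0, le_max_right _ _, fun t ht => hT t ((le_max_left _ _).trans ht)⟩
  have hM0 : 0 ≤ M := (abs_nonneg _).trans (hM 0 le_rfl)
  have hm0 : 0 ≤ m := (abs_nonneg _).trans (hTm T le_rfl)
  have htail : ∀ᶠ t in atTop, M * ∫ w in Ici (t - T), b w < δ := by
    have hshift : Tendsto (fun t => t - T) atTop atTop :=
      tendsto_atTop_atTop.2 fun r => ⟨r + T, fun t ht => by linarith⟩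
    have := ((tendsto_setIntegral_Ici_atTop hb).comp hshift).const_mul M
    rw [mul_zero] at this
    exact this.eventually_lt_const hδ
  filter_upwards [htail, eventually_ge_atTop T] with t htail htT
  have hxc : ∀ {u v}, 0 ≤ u → ContinuousOn x (Icc u v) := fun hu =>
    hx.mono (Icc_subset_Ici_self.trans (Ici_subset_Ici.2 hu))
  rw [← intervalIntegral.integral_add_adjacent_intervals
    (intervalIntegrable_comp_sub_mul hb hT0 htT (hxc le_rfl))
    (intervalIntegrable_comp_sub_mul hb htT le_rfl (hxc hT0))]
  have hearly := abs_integral_comp_sub_mul_le hb_nonneg hb hM0 hT0 htT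
    fun s hs => hM s hs.1.le
  have hlate := abs_integral_comp_sub_mul_le hb_nonneg hb hm0 htT le_rfl
    fun s hs => hTm s hs.1.le
  rw [sub_self] at hlate
  exact (abs_add_le _ _).trans (by linarith)

lemma abs_le_abs_initial {γ : ℝ} {a : ℝ → ℝ} (ha : ∀ t ≥ 0, a t ≤ -γ)
    (hb_nonneg : ∀ s, 0 ≤ b s) (hb : IntegrableOn b (Ici 0)) (hbγ : ∫ t in Ici 0, b t < γ)
    (hx : ∀ t ≥ 0, HasDerivAt x (a t * x t + ∫ s in (0:ℝ)..t, b (t - s) * x s) t) :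
    ∀ t ≥ 0, |x t| ≤ |x 0| := by
  intro t ht
  refine le_of_forall_gt_imp_ge_of_dense fun c hc => (abs_lt_of_hasDerivAt_of_mul_neg hx hc
    (fun t' ht' hle heq => ?_) t ht).le
  have hc0 : 0 < c := (abs_nonneg _).trans_lt hc
  have hconv := abs_integral_comp_sub_mul_le hb_nonneg hb hc0.le ht'.le le_rfl
    fun s hs => hle s (Ioc_subset_Icc_self hs)
  rw [sub_self] at hconv
  have h1 : a t' * (x t' * x t') ≤ -γ * (c * c) := by
    rw [← heq, abs_mul_abs_self]
    exact mul_le_mul_of_nonneg_right (ha t' ht'.le) (mul_self_nonneg _)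
  have h2 : x t' * ∫ s in (0:ℝ)..t', b (t' - s) * x s ≤ c * (c * ∫ t in Ici 0, b t) :=
    (le_abs_self _).trans (by rw [abs_mul, heq]; exact mul_le_mul_of_nonneg_left hconv hc0.le)
  nlinarith [mul_pos (mul_pos hc0 hc0) (sub_pos.2 hbγ)]

end Convolution

theorem stmt_11_general (γ : ℝ)
    (a : ℝ → ℝ) (ha : ∀ t ≥ 0, a t ≤ -γ)
    (b : ℝ → ℝ) (hb_nonneg : ∀ t, 0 ≤ b t)
    (hb_int : IntegrableOn b (Set.Ici 0))
    (hsmall : -γ + ∫ t in Set.Ici (0:ℝ), b t < 0)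
    (x : ℝ → ℝ)
    (hx : ∀ t ≥ 0, HasDerivAt x (a t * x t + ∫ s in (0:ℝ)..t, b (t - s) * x s) t) :
    Tendsto x atTop (nhds 0) := by
  have hβ0 : 0 ≤ ∫ t in Ici (0:ℝ), b t :=
    setIntegral_nonneg measurableSet_Ici fun t _ => hb_nonneg t
  have hγ : 0 < γ := by linarith
  have hbound := abs_le_abs_initial ha hb_nonneg hb_int (by linarith) hx
  refine tendsto_zero_of_eventually_abs_le_mul_add (div_nonneg hβ0 hγ.le)
    ((div_lt_one hγ).2 (by linarith)) (eventually_atTop.2 ⟨0, hbound⟩) fun m ε hε hm => ?_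
  have hconv := eventually_abs_integral_comp_sub_mul_le hb_nonneg hb_int
    (fun t ht => (hx t ht).continuousAt.continuousWithinAt) hbound hm (half_pos (mul_pos hγ hε))
  obtain ⟨T, hT⟩ := eventually_atTop.1 (hconv.and (eventually_ge_atTop 0))
  refine (eventually_abs_lt_of_hasDerivAt_mul_add hγ (fun t ht => ha t (hT t ht).2)
    (fun t ht => (hT t ht).1) ?_ fun t ht => hx t (hT t ht).2).mono fun t ht => ht.le
  field_simp
  linarith [mul_pos hγ hε]

/-- Scalar comparison for integro-differential systems: if `a(t) ≤ -γ`, `b ≥ 0`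
is integrable on `[0,∞)` with `-γ + ∫₀^∞ b < 0`, then every solution of
`ẋ = a(t)x + ∫₀^t b(t-s)x(s) ds` with `x(0) > 0` converges to `0`. -/
theorem stmt_11 (γ : ℝ) (hγ : 0 < γ)
    (a : ℝ → ℝ) (ha_cont : Continuous a) (ha : ∀ t ≥ 0, a t ≤ -γ)
    (b : ℝ → ℝ) (hb_nonneg : ∀ t, 0 ≤ b t)
    (hb_int : IntegrableOn b (Set.Ici 0))
    (hsmall : -γ + ∫ t in Set.Ici (0:ℝ), b t < 0)
    (x : ℝ → ℝ)
    (hx : ∀ t ≥ 0, HasDerivAt x (a t * x t + ∫ s in (0:ℝ)..t, b (t - s) * x s) t)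
    (hx0 : 0 < x 0) :
    Tendsto x atTop (nhds 0) :=
  stmt_11_general γ a ha b hb_nonneg hb_int hsmall x hx
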